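/- arXiv:2311.06974 — 2 statements merged into one kernel-verified Lean document; each statement's English description precedes it below -/
import Mathlib

section
/- Let n ≥ 3 and X ⊆ {2,…,n−1}. If S is a Hamilton sequence for the restricted rotator graph RR_{n−1}(X), then reuse_n(S) is a Hamilton sequence for the restricted rotator graph RR_n(R), where R = {n} ∪ {n−x+1 : x ∈ X}. -/
/-!
Write `n = m + 1`, so that `σ_n = finRotate n`. A block `n, …, n, n + 1 - r` of `reuse_n`
contributes `σ_n⁻¹ σ_{n+1-r}`, which fixes the first position and permutes the last `m`
positions, read backwards, exactly as `σ_r` permutes the `m` positions of a string of length `m`.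
This identification `liftRev` is an injective group homomorphism, so the partial products of
`reuse_n(S)` are `liftRev π_q · σ_n^k` (`0 ≤ k < n`) where the `π_q` are the partial products
of `S`. The exponent `k` is determined by which position is sent to the first one, and then
`π_q` by injectivity; so these `n · (n-1)! = n!` products are distinct, and the last one is
`liftRev 1 = 1`.
-/

open Equiv

/-- The prefix-rotation `σ_r = (1 2 ⋯ r)` of positions, 0-indexed as a
permutation of `Fin n` (it sends position `i` to `i+1` for `i < r-1`,
sends position `r-1` to `0`, and fixes all positions `≥ r`). -/
def sigmaRot (n r : ℕ) : Equiv.Perm (Fin n) :=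
  if h : r - 1 < n then Fin.cycleRange ⟨r - 1, h⟩ else 1

/-- The permutation `σ_{r₁}σ_{r₂}⋯σ_{r_i}` (composed left-to-right) given by the
first `i` entries of the sequence `S`. -/
def partialProd (n : ℕ) (S : List ℕ) (i : ℕ) : Equiv.Perm (Fin n) :=
  ((S.take i).map (sigmaRot n)).prod

/-- `S` is a Hamilton sequence for the restricted rotator graph `RR_n(R)`. -/
def IsHamiltonSeq (n : ℕ) (R : Set ℕ) (S : List ℕ) : Prop :=
  S.length = Nat.factorial n ∧
  (∀ r ∈ S, r ∈ R) ∧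
  (∀ i < Nat.factorial n, ∀ j < Nat.factorial n,
      partialProd n S i = partialProd n S j → i = j) ∧
  partialProd n S S.length = 1

/-- The value (0-indexed symbol) at the last position of the string `a`;
the one-line-notation symbol there is `lastVal a + 1`. -/
def lastVal {n : ℕ} (a : Equiv.Perm (Fin n)) : ℕ :=
  if h : 0 < n then ((a ⟨n - 1, Nat.sub_lt h Nat.one_pos⟩ : Fin n) : ℕ) else 0

/-- Arc relation of the restricted incomplete rotator graph `RIR_n(R,m)`:
both endpoints have last symbol `≤ m` and `b = a·σ_r` for some `r ∈ R`. -/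
def RIRAdj (n m : ℕ) (R : Set ℕ) (a b : Equiv.Perm (Fin n)) : Prop :=
  lastVal a < m ∧ lastVal b < m ∧ ∃ r ∈ R, b = a * sigmaRot n r

/-- `RIR_n(R,m)` is strongly connected. -/
def StronglyConnectedRIR (n m : ℕ) (R : Set ℕ) : Prop :=
  ∀ a b : Equiv.Perm (Fin n), lastVal a < m → lastVal b < m →
    Relation.ReflTransGen (RIRAdj n m R) a b

/-- The reuse operation: replace each entry `r` by `n,…,n,n+1-r` (`n-1` copies of `n`). -/
def reuseOp (n : ℕ) (S : List ℕ) : List ℕ :=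
  (S.map (fun r => List.replicate (n - 1) n ++ [n + 1 - r])).flatten

/-- Corbett's reuse sequences: `C₁ = (1)` and `C_k = reuse_k(C_{k-1})`. -/
def corbettC : ℕ → List ℕ
  | 0 => []
  | 1 => [1]
  | k + 2 => reuseOp (k + 2) (corbettC (k + 1))

/-- The recycle operation: replace each entry `r` by
`n, n, n-1, …, n-1, n, …, n` (`r-1` copies of `n-1`, then `n-r-1` copies of `n`). -/
def recycleOp (n : ℕ) (S : List ℕ) : List ℕ :=
  (S.map (fun r => n :: n :: (List.replicate (r - 1) (n - 1) ++ List.replicate (n - r - 1) n))).flatten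

/-- The canonical recycle sequences: `D₁ = (1)` and `D_k = recycle_k(D_{k-1})`. -/
def recycleD : ℕ → List ℕ
  | 0 => []
  | 1 => [1]
  | k + 2 => recycleOp (k + 2) (recycleD (k + 1))

/-- The rewind operation `rewind_m(S)` (with `S = T, n-1, n-1`):
`(T,n-1,n)`, then `m-2` copies of `(T,n)`, then `(T,n-1,n)`, then `m-2` copies of `n`. -/
def rewindOp (n m : ℕ) (S : List ℕ) : List ℕ :=
  (S.dropLast.dropLast ++ [n - 1, n])
    ++ (List.replicate (m - 2) (S.dropLast.dropLast ++ [n])).flatten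
    ++ (S.dropLast.dropLast ++ [n - 1, n])
    ++ List.replicate (m - 2) n

/-- The canonical rewind sequences: `W₂ = (2,2)` and `W_k = rewind_k(W_{k-1})`. -/
def rewindW : ℕ → List ℕ
  | 0 => []
  | 1 => []
  | 2 => [2, 2]
  | k + 3 => rewindOp (k + 3) (k + 3) (rewindW (k + 2))

/-- `S` is a Hamilton sequence for the restricted incomplete rotator graph `RIR_n(R,m)`,
starting from the string `n n-1 ⋯ 1` (which is `Fin.revPerm`). -/
def IsHamiltonSeqRIR (n m : ℕ) (R : Set ℕ) (S : List ℕ) : Prop :=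
  S.length = m * Nat.factorial (n - 1) ∧
  (∀ r ∈ S, r ∈ R) ∧
  (∀ i < S.length, ∀ j < S.length,
      Fin.revPerm * partialProd n S i = Fin.revPerm * partialProd n S j → i = j) ∧
  {b : Equiv.Perm (Fin n) | ∃ i < S.length, b = Fin.revPerm * partialProd n S i}
    = {b : Equiv.Perm (Fin n) | lastVal b < m} ∧
  Fin.revPerm * partialProd n S S.length = Fin.revPerm

/-- The cyclic shift `shift²` moving the first two entries to the end. -/
def shift2 (S : List ℕ) : List ℕ := S.drop 2 ++ S.take 2


noncomputable def liftRev (m : ℕ) : Perm (Fin m) →* Perm (Fin (m + 1)) :=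
  Perm.viaEmbeddingHom (Fin.revPerm.toEmbedding.trans (Fin.succEmb m))

section liftRev

variable {m : ℕ}

@[simp]
lemma liftRev_apply_zero (π : Perm (Fin m)) : liftRev m π 0 = 0 :=
  Perm.viaEmbedding_apply_of_notMem _ _ _ (by simp [Fin.succ_ne_zero])

@[simp]
lemma liftRev_apply_succ_rev (π : Perm (Fin m)) (j : Fin m) :
    liftRev m π j.rev.succ = (π j).rev.succ :=
  Perm.viaEmbedding_apply π _ j

lemma liftRev_injective : Function.Injective (liftRev m) :=
  Perm.viaEmbeddingHom_injective _

end liftRev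

open Fin.NatCast in
lemma finRotate_pow_apply (m k : ℕ) (x : Fin (m + 1)) :
    (finRotate (m + 1) ^ k) x = x + (k : Fin (m + 1)) := by
  induction k generalizing x with
  | zero => simp
  | succ k ih => rw [pow_succ, Perm.mul_apply, finRotate_apply, ih]; push_cast; abel

lemma finRotate_pow_eq_inv (m : ℕ) : finRotate (m + 1) ^ m = (finRotate (m + 1))⁻¹ := by
  rw [eq_inv_iff_mul_eq_one, ← pow_succ]
  ext x
  simp [finRotate_pow_apply]

lemma sigmaRot_self (m : ℕ) : sigmaRot (m + 1) (m + 1) = finRotate (m + 1) := by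
  simp [sigmaRot, ← Fin.cycleRange_last]; rfl

lemma coe_sigmaRot {n r : ℕ} (hr : r - 1 < n) (x : Fin n) :
    (sigmaRot n r x : ℕ) =
      if (x : ℕ) < r - 1 then (x : ℕ) + 1 else if (x : ℕ) = r - 1 then 0 else x := by
  have : NeZero n := ⟨by omega⟩
  rw [sigmaRot, dif_pos hr, Fin.cycleRange_apply]
  split_ifs <;> simp_all [Fin.lt_def, Fin.ext_iff]
  exact Fin.val_add_one_of_lt' (by omega)

lemma coe_finRotate_inv (m : ℕ) (x : Fin (m + 1)) :
    ((finRotate (m + 1))⁻¹ x : ℕ) = if (x : ℕ) = 0 then m else x - 1 := by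
  rw [Perm.inv_def, finRotate_symm_apply, Fin.coe_sub_one]
  simp only [Fin.ext_iff, Fin.val_zero]

lemma finRotate_pow_mul_sigmaRot {m r : ℕ} (hr : 1 ≤ r) (hrm : r ≤ m) :
    finRotate (m + 1) ^ m * sigmaRot (m + 1) (m + 2 - r) = liftRev m (sigmaRot m r) := by
  have hr' : m + 2 - r - 1 < m + 1 := by omega
  rw [finRotate_pow_eq_inv]
  ext x : 1
  rw [Fin.ext_iff]
  induction x using Fin.cases with
  | zero =>
    simp only [Perm.mul_apply, coe_finRotate_inv, coe_sigmaRot hr', liftRev_apply_zero,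
      Fin.val_zero]
    simp [show 1 < m + 2 - r by omega]
  | succ i =>
    obtain ⟨j, rfl⟩ := Fin.rev_surjective i
    have := j.isLt
    rw [Perm.mul_apply, liftRev_apply_succ_rev]
    simp only [coe_finRotate_inv, Fin.val_succ, Fin.val_rev, coe_sigmaRot hr',
      coe_sigmaRot (show r - 1 < m by omega)]
    split_ifs <;> first | contradiction | omega

open Fin.NatCast in
lemma liftRev_mul_finRotate_pow_injective {m k l : ℕ} {π ρ : Perm (Fin m)}
    (hk : k < m + 1) (hl : l < m + 1)
    (h : liftRev m π * finRotate (m + 1) ^ k = liftRev m ρ * finRotate (m + 1) ^ l) :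
    π = ρ ∧ k = l := by
  have hkl : k = l := by
    -- at `-k` the left side is `0`, and `liftRev ρ` sends only `0` to `0`
    have h0 := DFunLike.congr_fun h (-(k : Fin (m + 1)))
    simp only [Perm.mul_apply, finRotate_pow_apply, neg_add_cancel, liftRev_apply_zero] at h0
    have : -(k : Fin (m + 1)) + l = 0 :=
      (liftRev m ρ).injective (by rw [← h0, liftRev_apply_zero])
    rw [neg_add_eq_zero] at this
    simpa [Nat.mod_eq_of_lt hk, Nat.mod_eq_of_lt hl] using congrArg Fin.val this
  subst hkl
  exact ⟨liftRev_injective (mul_right_cancel h), rfl⟩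

section reuseOp

variable {n m : ℕ}

lemma reuseOp_cons (r : ℕ) (S : List ℕ) :
    reuseOp n (r :: S) = List.replicate (n - 1) n ++ [n + 1 - r] ++ reuseOp n S := by
  simp [reuseOp]

lemma reuseOp_append (S T : List ℕ) : reuseOp n (S ++ T) = reuseOp n S ++ reuseOp n T := by
  simp [reuseOp]

lemma length_reuseOp (S : List ℕ) : (reuseOp (m + 1) S).length = (m + 1) * S.length := by
  induction S with
  | nil => simp [reuseOp]
  | cons r S ih => simp [reuseOp_cons, ih]; ring

lemma of_mem_reuseOp {r : ℕ} {S : List ℕ} (h : r ∈ reuseOp n S) :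
    r = n ∨ ∃ x ∈ S, r = n + 1 - x := by
  simp only [reuseOp, List.mem_flatten, List.mem_map] at h
  obtain ⟨_, ⟨x, hx, rfl⟩, hr⟩ := h
  simp only [List.mem_append, List.mem_replicate, List.mem_singleton] at hr
  rcases hr with ⟨_, rfl⟩ | rfl
  · exact Or.inl rfl
  · exact Or.inr ⟨x, hx, rfl⟩

lemma take_reuseOp {S : List ℕ} {q k : ℕ} (hq : q < S.length) (hk : k ≤ m) :
    (reuseOp (m + 1) S).take ((m + 1) * q + k)
      = reuseOp (m + 1) (S.take q) ++ List.replicate k (m + 1) := by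
  obtain ⟨r, T, hT⟩ :=
    List.exists_cons_of_length_pos (by simpa using hq : 0 < (S.drop q).length)
  have hsplit : S = S.take q ++ r :: T := by rw [← hT, List.take_append_drop]
  have hlen : (reuseOp (m + 1) (S.take q)).length = (m + 1) * q := by
    rw [length_reuseOp, List.length_take_of_le hq.le]
  conv_lhs => rw [hsplit, reuseOp_append, ← hlen, List.take_length_add_append, reuseOp_cons,
    List.append_assoc, List.take_append_of_le_length (by simpa using hk), List.take_replicate,
    Nat.min_eq_left (by simpa using hk)]

lemma prod_map_sigmaRot_reuseOp {S : List ℕ} (hS : ∀ r ∈ S, 1 ≤ r ∧ r ≤ m) :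
    ((reuseOp (m + 1) S).map (sigmaRot (m + 1))).prod
      = liftRev m ((S.map (sigmaRot m)).prod) := by
  induction S with
  | nil => simp [reuseOp]
  | cons r S ih =>
    obtain ⟨hr1, hrm⟩ := hS r List.mem_cons_self
    rw [reuseOp_cons, List.map_append, List.prod_append,
      ih fun x hx => hS x (List.mem_cons_of_mem r hx), List.map_cons, List.prod_cons, map_mul,
      List.map_append, List.prod_append, List.map_replicate, List.prod_replicate,
      sigmaRot_self, List.map_singleton, List.prod_singleton]
    congr 1
    exact finRotate_pow_mul_sigmaRot hr1 hrm

lemma partialProd_reuseOp {S : List ℕ} (hS : ∀ r ∈ S, 1 ≤ r ∧ r ≤ m) {q k : ℕ}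
    (hq : q < S.length) (hk : k ≤ m) :
    partialProd (m + 1) (reuseOp (m + 1) S) ((m + 1) * q + k)
      = liftRev m (partialProd m S q) * finRotate (m + 1) ^ k := by
  rw [partialProd, take_reuseOp hq hk, List.map_append, List.prod_append,
    prod_map_sigmaRot_reuseOp fun r hr => hS r (List.mem_of_mem_take hr), List.map_replicate,
    List.prod_replicate, sigmaRot_self, partialProd]

lemma partialProd_reuseOp_length {S : List ℕ} (hS : ∀ r ∈ S, 1 ≤ r ∧ r ≤ m) :
    partialProd (m + 1) (reuseOp (m + 1) S) (reuseOp (m + 1) S).length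
      = liftRev m (partialProd m S S.length) := by
  simp only [partialProd, List.take_length, prod_map_sigmaRot_reuseOp hS]

lemma partialProd_reuseOp_inj {S : List ℕ} (hS : ∀ r ∈ S, 1 ≤ r ∧ r ≤ m)
    (hinj : ∀ i < S.length, ∀ j < S.length, partialProd m S i = partialProd m S j → i = j)
    {i j : ℕ} (hi : i < (m + 1) * S.length) (hj : j < (m + 1) * S.length)
    (hij : partialProd (m + 1) (reuseOp (m + 1) S) i
      = partialProd (m + 1) (reuseOp (m + 1) S) j) :
    i = j := by
  have hdiv : ∀ i < (m + 1) * S.length, i / (m + 1) < S.length := fun i hi =>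
    (Nat.div_lt_iff_lt_mul (Nat.succ_pos m)).2 (by rwa [mul_comm])
  have hmod : ∀ i, i % (m + 1) ≤ m := fun i => Nat.le_of_lt_succ (Nat.mod_lt i (Nat.succ_pos m))
  rw [← Nat.div_add_mod i (m + 1), ← Nat.div_add_mod j (m + 1),
    partialProd_reuseOp hS (hdiv i hi) (hmod i), partialProd_reuseOp hS (hdiv j hj) (hmod j)] at hij
  obtain ⟨hq, hk⟩ := liftRev_mul_finRotate_pow_injective (Nat.lt_succ_of_le (hmod i))
    (Nat.lt_succ_of_le (hmod j)) hij
  rw [← Nat.div_add_mod i (m + 1), ← Nat.div_add_mod j (m + 1),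
    hinj _ (hdiv i hi) _ (hdiv j hj) hq, hk]

end reuseOp

theorem stmt7_general (n : ℕ) (X : Set ℕ) (hX : X ⊆ {r | 2 ≤ r ∧ r ≤ n - 1})
    (S : List ℕ) (hS : IsHamiltonSeq (n - 1) X S) :
    IsHamiltonSeq n ({n} ∪ {r | ∃ x ∈ X, r = n - x + 1}) (reuseOp n S) := by
  obtain ⟨hlen, hSX, hinj, hprod⟩ := hS
  have hrange : ∀ r ∈ S, 2 ≤ r ∧ r ≤ n - 1 := fun r hr => hX (hSX r hr)
  obtain ⟨m, rfl⟩ : ∃ m, n = m + 1 := by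
    obtain ⟨r, hr⟩ := List.exists_mem_of_length_pos (hlen ▸ Nat.factorial_pos _)
    exact ⟨n - 1, by have := hrange r hr; omega⟩
  have hS : ∀ r ∈ S, 1 ≤ r ∧ r ≤ m := fun r hr => by have := hrange r hr; omega
  rw [Nat.add_sub_cancel] at hlen
  have hlen' : (reuseOp (m + 1) S).length = (m + 1).factorial := by
    rw [length_reuseOp, hlen, Nat.factorial_succ]
  refine ⟨hlen', fun r hr => ?_, fun i hi j hj => ?_, ?_⟩
  · rcases of_mem_reuseOp hr with rfl | ⟨x, hx, rfl⟩
    · exact Or.inl rfl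
    · exact Or.inr ⟨x, hSX x hx, by have := hS x hx; omega⟩
  · rw [← hlen', length_reuseOp] at hi hj
    exact partialProd_reuseOp_inj hS (hlen ▸ hinj) hi hj
  · rw [partialProd_reuseOp_length hS]
    exact (congrArg (liftRev m) hprod).trans (map_one _)

/-- For `n ≥ 3` and `X ⊆ {2,…,n-1}`: if `S` is a Hamilton sequence for
`RR_{n-1}(X)`, then `reuse_n(S)` is a Hamilton sequence for `RR_n(R)` with
`R = {n} ∪ {n-x+1 : x ∈ X}`. -/
theorem stmt7 (n : ℕ) (hn : 3 ≤ n) (X : Set ℕ) (hX : X ⊆ {r | 2 ≤ r ∧ r ≤ n - 1})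
    (S : List ℕ) (hS : IsHamiltonSeq (n - 1) X S) :
    IsHamiltonSeq n ({n} ∪ {r | ∃ x ∈ X, r = n - x + 1}) (reuseOp n S) :=
  stmt7_general n X hX S hS
end

section
/- For every n ≥ 3, the sequence reuse_n(D_{n−1}), obtained by reusing the canonical recycle sequence D_{n−1}, is a Hamilton sequence for the restricted rotator graph RR_n({2,3,n}). -/
/-!
Write `n = k + 1`. By induction, `D_k` is a Hamilton sequence of `RR_k({k-1, k})`; read in
`Sym(n)`, its partial products `P_i` are exactly the permutations fixing the last position.
Both `reuse_n` and `recycle_n` replace each entry `r` by a block of length `n` whose proper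
prefixes have products `B_t` not depending on `r`, and whose full product is `c σ_r c⁻¹` for a
fixed `c` sending the last position to `0` (the reversal for `reuse`, `σ_n` for `recycle`).
So the partial product at position `n i + t` is `c P_i c⁻¹ B_t`. Its inverse sends `0` to
`B_t⁻¹ 0 = -t`, which recovers `t`, and then `P_i` recovers `i`; the total product is
`c · 1 · c⁻¹ = 1`.
-/

open Equiv

lemma sigmaRot_apply_val {n r : ℕ} (hr : 1 ≤ r) (hrn : r ≤ n) (x : Fin n) :
    (sigmaRot n r x : ℕ) = if (x : ℕ) < r then ((x : ℕ) + 1) % r else x := by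
  have hr' : r - 1 < n := by omega
  rw [sigmaRot, dif_pos hr']
  split_ifs with hx
  · rw [Fin.coe_cycleRange_of_le (Fin.le_def.2 (by simp only; omega))]
    split_ifs with hxr
    · rw [Fin.ext_iff] at hxr
      simp only at hxr
      rw [hxr, Nat.sub_add_cancel hr, Nat.mod_self]
    · rw [Fin.ext_iff] at hxr
      exact (Nat.mod_eq_of_lt (by simp only at hxr; omega)).symm
  · rw [Fin.cycleRange_of_gt (Fin.lt_def.2 (by simp only; omega))]

lemma sigmaRot_pow_apply_val {n r : ℕ} (hr : 1 ≤ r) (hrn : r ≤ n) (t : ℕ) (x : Fin n) :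
    ((sigmaRot n r ^ t) x : ℕ) = if (x : ℕ) < r then ((x : ℕ) + t) % r else x := by
  induction t generalizing x with
  | zero =>
    split_ifs with hx
    · exact (Nat.mod_eq_of_lt hx).symm
    · rfl
  | succ t ih =>
    rw [pow_succ, Perm.mul_apply, ih, sigmaRot_apply_val hr hrn]
    split_ifs with hx h'
    · rw [Nat.mod_add_mod, Nat.add_right_comm, Nat.add_assoc]
    · exact absurd (Nat.mod_lt _ (by omega)) h'
    · omega

lemma sigmaRot_succ_self_eq_finRotate (k : ℕ) : sigmaRot (k + 1) (k + 1) = finRotate (k + 1) := by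
  rw [sigmaRot, dif_pos (by omega), ← Fin.cycleRange_last]
  rfl

open Fin.NatCast in
lemma finRotate_succ_pow_apply (k t : ℕ) (x : Fin (k + 1)) :
    (finRotate (k + 1) ^ t) x = x + (t : Fin (k + 1)) := by
  induction t with
  | zero => simp
  | succ t ih => rw [pow_succ', Perm.mul_apply, ih, finRotate_apply, Nat.cast_succ, add_assoc]

lemma sigmaRot_succ_eq_viaEmbedding {k r : ℕ} (hr : 1 ≤ r) (hrk : r ≤ k) :
    sigmaRot (k + 1) r = (sigmaRot k r).viaEmbedding Fin.castSuccEmb := by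
  ext x
  induction x using Fin.lastCases with
  | last =>
    rw [Perm.viaEmbedding_apply_of_notMem _ _ _ (by simp), sigmaRot_apply_val hr (by omega),
      if_neg (by simp only [Fin.val_last]; omega), Fin.val_last]
  | cast y =>
    rw [← Fin.coe_castSuccEmb, Perm.viaEmbedding_apply]
    simp only [Fin.coe_castSuccEmb, Fin.val_castSucc]
    rw [sigmaRot_apply_val hr (by omega), sigmaRot_apply_val hr hrk, Fin.val_castSucc]

lemma partialProd_succ_eq_viaEmbeddingHom {k : ℕ} {S : List ℕ} (hS : ∀ r ∈ S, 1 ≤ r ∧ r ≤ k)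
    (i : ℕ) :
    partialProd (k + 1) S i = Perm.viaEmbeddingHom Fin.castSuccEmb (partialProd k S i) := by
  rw [partialProd, partialProd, map_list_prod, List.map_map]
  congr 1
  refine List.map_congr_left fun r hr => ?_
  obtain ⟨hr1, hrk⟩ := hS r (List.mem_of_mem_take hr)
  exact sigmaRot_succ_eq_viaEmbedding hr1 hrk

lemma partialProd_succ_apply_last {k : ℕ} {S : List ℕ} (hS : ∀ r ∈ S, 1 ≤ r ∧ r ≤ k) (i : ℕ) :
    partialProd (k + 1) S i (Fin.last k) = Fin.last k := by
  rw [partialProd_succ_eq_viaEmbeddingHom hS, Perm.viaEmbeddingHom_apply]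
  exact Perm.viaEmbedding_apply_of_notMem _ _ _ (by simp)

lemma List.length_flatten_of_forall_length_eq {α : Type*} {L : List (List α)} {m : ℕ}
    (hL : ∀ l ∈ L, l.length = m) : L.flatten.length = m * L.length := by
  rw [List.length_flatten, List.map_congr_left hL, List.map_const', List.sum_replicate,
    smul_eq_mul, mul_comm]

lemma List.take_flatten_of_forall_length_eq {α : Type*} {L : List (List α)} {m i t : ℕ}
    (hL : ∀ l ∈ L, l.length = m) (hi : i < L.length) (ht : t ≤ m) :
    L.flatten.take (m * i + t) = (L.take i).flatten ++ L[i].take t := by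
  have hlen : (L.take i).flatten.length = m * i := by
    rw [List.length_flatten_of_forall_length_eq fun l hl => hL l (List.mem_of_mem_take hl),
      List.length_take_of_le hi.le]
  conv_lhs => rw [← List.take_append_drop i L, List.flatten_append, List.drop_eq_getElem_cons hi,
    List.flatten_cons, ← hlen, List.take_length_add_append]
  rw [List.take_append_of_le_length (by rw [hL _ (List.getElem_mem hi)]; exact ht)]

lemma prod_map_sigmaRot_flatten_map {n : ℕ} {S : List ℕ} {blk : ℕ → List ℕ}
    {c : Perm (Fin n)} (hblk : ∀ r ∈ S, ((blk r).map (sigmaRot n)).prod = c * sigmaRot n r * c⁻¹) :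
    ((S.map blk).flatten.map (sigmaRot n)).prod = c * (S.map (sigmaRot n)).prod * c⁻¹ := by
  have hconj : S.map ((List.prod ∘ List.map (sigmaRot n)) ∘ blk)
      = S.map (MulAut.conj c ∘ sigmaRot n) := List.map_congr_left hblk
  rw [List.map_flatten, List.prod_flatten, List.map_map, List.map_map, hconj, ← List.map_map,
    ← map_list_prod, MulAut.conj_apply]

lemma partialProd_flatten_map {n m : ℕ} {S : List ℕ} {blk : ℕ → List ℕ} {c : Perm (Fin n)}
    (hlen : ∀ r ∈ S, (blk r).length = m)
    (hblk : ∀ r ∈ S, ((blk r).map (sigmaRot n)).prod = c * sigmaRot n r * c⁻¹)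
    {u : ℕ} (hu : u < m * S.length) :
    partialProd n (S.map blk).flatten u = c * partialProd n S (u / m) * c⁻¹
      * partialProd n (blk (S[u / m]'(Nat.div_lt_of_lt_mul hu))) (u % m) := by
  have hL : ∀ l ∈ S.map blk, l.length = m := by
    simp only [List.mem_map]
    rintro _ ⟨r, hr, rfl⟩
    exact hlen r hr
  have hm : 0 < m := Nat.pos_of_ne_zero fun h => by simp [h] at hu
  conv_lhs => rw [← Nat.div_add_mod u m]
  rw [partialProd, List.take_flatten_of_forall_length_eq hL
      (by simpa using Nat.div_lt_of_lt_mul hu) (Nat.mod_lt u hm).le,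
    List.map_append, List.prod_append, ← List.map_take,
    prod_map_sigmaRot_flatten_map fun r hr => hblk r (List.mem_of_mem_take hr), List.getElem_map]
  rfl

lemma Equiv.Perm.inv_conj_mul_apply {α : Type*} {c P B : Perm α} {a b : α} (hc : c a = b)
    (hP : P a = a) : (c * P * c⁻¹ * B)⁻¹ b = B⁻¹ b := by
  have hc' : c⁻¹ b = a := Perm.inv_eq_iff_eq.2 hc.symm
  have hP' : P⁻¹ a = a := Perm.inv_eq_iff_eq.2 hP.symm
  simp only [mul_inv_rev, inv_inv, Perm.mul_apply, hc', hP', hc]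

theorem IsHamiltonSeq.flatten_map {k : ℕ} {R R' : Set ℕ} {S : List ℕ} (hS : IsHamiltonSeq k R S)
    (hR : ∀ r ∈ R, 1 ≤ r ∧ r ≤ k) (blk : ℕ → List ℕ) (B : ℕ → Perm (Fin (k + 1)))
    (c : Perm (Fin (k + 1))) (hlen : ∀ r ∈ R, (blk r).length = k + 1)
    (hprefix : ∀ r ∈ R, ∀ t < k + 1, partialProd (k + 1) (blk r) t = B t)
    (hblk : ∀ r ∈ R, ((blk r).map (sigmaRot (k + 1))).prod = c * sigmaRot (k + 1) r * c⁻¹)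
    (hc : c (Fin.last k) = 0) (hB : Set.InjOn (fun t => (B t)⁻¹ 0) (Set.Iio (k + 1)))
    (hR' : ∀ r ∈ R, ∀ x ∈ blk r, x ∈ R') :
    IsHamiltonSeq (k + 1) R' (S.map blk).flatten := by
  obtain ⟨hSlen, hSR, hSinj, hSprod⟩ := hS
  have hSk : ∀ r ∈ S, 1 ≤ r ∧ r ≤ k := fun r hr => hR r (hSR r hr)
  have hlenS : ∀ r ∈ S, (blk r).length = k + 1 := fun r hr => hlen r (hSR r hr)
  have hblkS := fun r hr => hblk r (hSR r hr)
  have hlen' : (S.map blk).flatten.length = (k + 1).factorial := by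
    rw [List.length_flatten_of_forall_length_eq (m := k + 1) (by simpa using hlenS),
      List.length_map, hSlen, Nat.factorial_succ]
  have hpos : ∀ u < (k + 1).factorial, partialProd (k + 1) (S.map blk).flatten u
      = c * partialProd (k + 1) S (u / (k + 1)) * c⁻¹ * B (u % (k + 1)) := by
    intro u hu
    rw [partialProd_flatten_map hlenS hblkS (by rwa [hSlen, ← Nat.factorial_succ]),
      hprefix _ (hSR _ (List.getElem_mem _)) _ (Nat.mod_lt u k.succ_pos)]
  have hdiv : ∀ u < (k + 1).factorial, u / (k + 1) < k.factorial := fun u hu =>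
    Nat.div_lt_of_lt_mul (by rwa [← Nat.factorial_succ])
  refine ⟨hlen', ?_, ?_, ?_⟩
  · simp only [List.mem_flatten, List.mem_map]
    rintro x ⟨_, ⟨r, hr, rfl⟩, hx⟩
    exact hR' r (hSR r hr) x hx
  · intro u hu v hv huv
    rw [hpos u hu, hpos v hv] at huv
    have ht : u % (k + 1) = v % (k + 1) := by
      refine hB (Nat.mod_lt u k.succ_pos) (Nat.mod_lt v k.succ_pos) ?_
      have := congrArg (fun p : Perm (Fin (k + 1)) => p⁻¹ 0) huv
      simpa only [Perm.inv_conj_mul_apply hc (partialProd_succ_apply_last hSk _)] using this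
    rw [ht, mul_left_inj, mul_left_inj, mul_right_inj,
      partialProd_succ_eq_viaEmbeddingHom hSk, partialProd_succ_eq_viaEmbeddingHom hSk] at huv
    have hi := hSinj _ (hdiv u hu) _ (hdiv v hv) (Perm.viaEmbeddingHom_injective _ huv)
    rw [← Nat.div_add_mod u (k + 1), ← Nat.div_add_mod v (k + 1), hi, ht]
  · have hSprod' : partialProd (k + 1) S S.length = 1 := by
      rw [partialProd_succ_eq_viaEmbeddingHom hSk, hSprod, map_one]
    rw [partialProd, List.take_length] at hSprod' ⊢
    rw [prod_map_sigmaRot_flatten_map hblkS, hSprod', mul_one, mul_inv_cancel]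

open Fin.NatCast in
lemma injOn_inv_apply_zero_of_apply_neg {k : ℕ} {B : ℕ → Perm (Fin (k + 1))}
    (hB : ∀ t < k + 1, B t (-(t : Fin (k + 1))) = 0) :
    Set.InjOn (fun t => (B t)⁻¹ 0) (Set.Iio (k + 1)) := by
  intro t ht t' ht' h
  simp only [Perm.inv_eq_iff_eq.2 (hB t ht).symm, Perm.inv_eq_iff_eq.2 (hB t' ht').symm,
    neg_inj, Fin.ext_iff, Fin.val_natCast] at h
  rwa [Nat.mod_eq_of_lt ht, Nat.mod_eq_of_lt ht'] at h

def reuseBlock (n r : ℕ) : List ℕ := List.replicate (n - 1) n ++ [n + 1 - r]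

lemma reuseOp_eq_flatten_map (n : ℕ) (S : List ℕ) :
    reuseOp n S = (S.map (reuseBlock n)).flatten := rfl

lemma length_reuseBlock {n : ℕ} (hn : 1 ≤ n) (r : ℕ) : (reuseBlock n r).length = n := by
  simp only [reuseBlock, List.length_append, List.length_replicate, List.length_singleton]
  omega

lemma partialProd_reuseBlock {n r t : ℕ} (ht : t < n) :
    partialProd n (reuseBlock n r) t = sigmaRot n n ^ t := by
  rw [partialProd, reuseBlock,
    List.take_append_of_le_length (by simp only [List.length_replicate]; omega),
    List.take_replicate, min_eq_left (by omega), List.map_replicate, List.prod_replicate]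

lemma prod_map_sigmaRot_reuseBlock {n r : ℕ} (hr : 1 ≤ r) (hrn : r < n) :
    ((reuseBlock n r).map (sigmaRot n)).prod = Fin.revPerm * sigmaRot n r * Fin.revPerm⁻¹ := by
  rw [reuseBlock, List.map_append, List.prod_append, List.map_replicate, List.prod_replicate,
    List.map_singleton, List.prod_singleton,
    show (Fin.revPerm : Perm (Fin n))⁻¹ = Fin.revPerm from rfl]
  ext x
  simp only [Perm.mul_apply, Fin.revPerm_apply]
  rw [sigmaRot_pow_apply_val (by omega) le_rfl, if_pos (Fin.is_lt _),
    sigmaRot_apply_val (by omega) (by omega), Fin.val_rev, sigmaRot_apply_val hr hrn.le,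
    Fin.val_rev]
  rcases lt_trichotomy (x : ℕ) (n - r) with hx | hx | hx
  · rw [if_pos (by omega), if_neg (by omega), Nat.mod_eq_of_lt (a := (x : ℕ) + 1) (by omega),
      show (x : ℕ) + 1 + (n - 1) = x + n by omega, Nat.add_mod_right, Nat.mod_eq_of_lt x.is_lt]
    omega
  · rw [if_pos (by omega), if_pos (by omega), show (x : ℕ) + 1 = n + 1 - r by omega, Nat.mod_self,
      show n - (n + 1 - r) + 1 = r by omega, Nat.mod_self, Nat.zero_add,
      Nat.mod_eq_of_lt (by omega)]
  · rw [if_neg (by omega), if_pos (by omega), show (x : ℕ) + (n - 1) = x - 1 + n by omega,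
      Nat.add_mod_right, Nat.mod_eq_of_lt (by omega), Nat.mod_eq_of_lt (by omega)]
    omega

open Fin.NatCast in
lemma sigmaRot_succ_self_pow_apply_neg (k t : ℕ) :
    (sigmaRot (k + 1) (k + 1) ^ t) (-(t : Fin (k + 1))) = 0 := by
  rw [sigmaRot_succ_self_eq_finRotate, finRotate_succ_pow_apply, neg_add_cancel]

def recycleBlock (n r : ℕ) : List ℕ :=
  n :: n :: (List.replicate (r - 1) (n - 1) ++ List.replicate (n - r - 1) n)

lemma recycleOp_eq_flatten_map (n : ℕ) (S : List ℕ) :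
    recycleOp n S = (S.map (recycleBlock n)).flatten := rfl

lemma length_recycleBlock {n r : ℕ} (hr : 1 ≤ r) (hrn : r < n) :
    (recycleBlock n r).length = n := by
  simp only [recycleBlock, List.length_cons, List.length_append, List.length_replicate]
  omega

-- The product of the first `t` entries `n, n, n-1, …, n-1` of a recycle block
-- (for `t < 2` the truncated `t - 2` is `0`).
def recyclePrefixProd (n t : ℕ) : Perm (Fin n) :=
  sigmaRot n n ^ min t 2 * sigmaRot n (n - 1) ^ (t - 2)

lemma partialProd_recycleBlock {n r t : ℕ} (hr : n - 2 ≤ r) (ht : t < n) :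
    partialProd n (recycleBlock n r) t = recyclePrefixProd n t := by
  match t with
  | 0 => simp [partialProd, recyclePrefixProd]
  | 1 => simp [partialProd, recycleBlock, recyclePrefixProd]
  | t + 2 =>
    rw [partialProd, recycleBlock, List.take_succ_cons, List.take_succ_cons,
      List.take_append_of_le_length (by simp only [List.length_replicate]; omega),
      List.take_replicate, min_eq_left (by omega)]
    simp only [List.map_cons, List.prod_cons, List.map_replicate, List.prod_replicate,
      recyclePrefixProd, show min (t + 2) 2 = 2 by omega, Nat.add_sub_cancel, pow_two, mul_assoc]

open Fin.NatCast in
lemma recyclePrefixProd_succ_apply_neg {k t : ℕ} (ht : t < k + 1) :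
    recyclePrefixProd (k + 1) t (-(t : Fin (k + 1))) = 0 := by
  unfold recyclePrefixProd
  rcases lt_or_ge t 2 with ht2 | ht2
  · rw [min_eq_left ht2.le, Nat.sub_eq_zero_of_le ht2.le, pow_zero, mul_one,
      sigmaRot_succ_self_pow_apply_neg]
  · have hneg : ((-(t : Fin (k + 1)) : Fin (k + 1)) : ℕ) = k + 1 - t := by
      rw [Fin.val_neg', Fin.val_natCast, Nat.mod_eq_of_lt ht, Nat.mod_eq_of_lt (by omega)]
    have hinner : ((sigmaRot (k + 1) (k + 1 - 1) ^ (t - 2)) (-(t : Fin (k + 1))) : ℕ) = k - 1 := by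
      rw [sigmaRot_pow_apply_val (by omega) (by omega), hneg, if_pos (by omega),
        show k + 1 - t + (t - 2) = k - 1 by omega, Nat.mod_eq_of_lt (by omega)]
    rw [min_eq_right ht2, Perm.mul_apply]
    ext
    rw [sigmaRot_pow_apply_val (by omega) le_rfl, if_pos (Fin.is_lt _), hinner,
      show k - 1 + 2 = k + 1 by omega, Nat.mod_self, Fin.val_zero]

lemma sigmaRot_mul_pow_mul_pow {n r : ℕ} (hr : 1 ≤ r) (hrn : r < n) :
    sigmaRot n n * sigmaRot n (n - 1) ^ (r - 1) * sigmaRot n n ^ (n - r) = sigmaRot n r := by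
  ext x
  have hx := x.is_lt
  simp only [Perm.mul_apply]
  rw [sigmaRot_apply_val (by omega) le_rfl, if_pos (Fin.is_lt _),
    sigmaRot_pow_apply_val (by omega) (by omega), sigmaRot_pow_apply_val (by omega) le_rfl,
    if_pos hx, sigmaRot_apply_val hr hrn.le]
  rcases lt_trichotomy (x : ℕ) (r - 1) with hxr | hxr | hxr
  · rw [Nat.mod_eq_of_lt (show (x : ℕ) + (n - r) < n by omega), if_pos (by omega),
      show (x : ℕ) + (n - r) + (r - 1) = x + (n - 1) by omega, Nat.add_mod_right,
      Nat.mod_eq_of_lt (show (x : ℕ) < n - 1 by omega), if_pos (by omega),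
      Nat.mod_eq_of_lt (show (x : ℕ) + 1 < r by omega),
      Nat.mod_eq_of_lt (show (x : ℕ) + 1 < n by omega)]
  · rw [show (x : ℕ) + (n - r) = n - 1 by omega, Nat.mod_eq_of_lt (show n - 1 < n by omega),
      if_neg (by omega), Nat.sub_add_cancel (show 1 ≤ n by omega), Nat.mod_self,
      if_pos (by omega), show (x : ℕ) + 1 = r by omega, Nat.mod_self]
  · rw [show (x : ℕ) + (n - r) = x - r + n by omega, Nat.add_mod_right,
      Nat.mod_eq_of_lt (show (x : ℕ) - r < n by omega), if_pos (by omega),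
      show (x : ℕ) - r + (r - 1) = x - 1 by omega,
      Nat.mod_eq_of_lt (show (x : ℕ) - 1 < n - 1 by omega), Nat.sub_add_cancel (by omega),
      Nat.mod_eq_of_lt hx, if_neg (by omega)]

lemma prod_map_sigmaRot_recycleBlock {n r : ℕ} (hr : 1 ≤ r) (hrn : r < n) :
    ((recycleBlock n r).map (sigmaRot n)).prod
      = sigmaRot n n * sigmaRot n r * (sigmaRot n n)⁻¹ := by
  have hpow : sigmaRot n n ^ (n - r - 1) = sigmaRot n n ^ (n - r) * (sigmaRot n n)⁻¹ := by
    rw [eq_mul_inv_iff_mul_eq, ← pow_succ, Nat.sub_add_cancel (by omega)]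
  simp only [recycleBlock, List.map_cons, List.prod_cons, List.map_append, List.prod_append,
    List.map_replicate, List.prod_replicate]
  rw [hpow, ← sigmaRot_mul_pow_mul_pow hr hrn]
  group

lemma recycleD_succ {k : ℕ} (hk : 1 ≤ k) : recycleD (k + 1) = recycleOp (k + 1) (recycleD k) := by
  obtain ⟨k, rfl⟩ : ∃ k', k = k' + 1 := ⟨k - 1, by omega⟩
  rfl

theorem isHamiltonSeq_recycleD {k : ℕ} (hk : 2 ≤ k) :
    IsHamiltonSeq k {k - 1, k} (recycleD k) := by
  induction k, hk using Nat.le_induction with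
  | base =>
    refine ⟨rfl, by simp [recycleD, recycleOp], ?_, by decide⟩
    intro i hi j hj h
    interval_cases i <;> interval_cases j <;> first | rfl | exact absurd h (by decide)
  | succ k hk ih =>
    have hR : ∀ r ∈ ({k - 1, k} : Set ℕ), k - 1 ≤ r ∧ r ≤ k := by
      rintro r (rfl | rfl) <;> omega
    rw [recycleD_succ (by omega), recycleOp_eq_flatten_map]
    refine ih.flatten_map (fun r hr => have := hR r hr; ⟨by omega, this.2⟩) _
      (recyclePrefixProd (k + 1)) _
      (fun r hr => have := hR r hr; length_recycleBlock (by omega) (by omega))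
      (fun r hr t ht => have := hR r hr; partialProd_recycleBlock (r := r) (by omega) ht)
      (fun r hr => have := hR r hr; prod_map_sigmaRot_recycleBlock (by omega) (by omega))
      (by rw [sigmaRot_succ_self_eq_finRotate, finRotate_last])
      (injOn_inv_apply_zero_of_apply_neg fun t ht => recyclePrefixProd_succ_apply_neg ht) ?_
    intro r _ x hx
    simp only [recycleBlock, List.mem_cons, List.mem_append, List.mem_replicate] at hx
    simp only [Set.mem_insert_iff, Set.mem_singleton_iff]
    omega

/-- For every `n ≥ 3`, the sequence `reuse_n(D_{n-1})`, obtained by reusing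
the canonical recycle sequence `D_{n-1}`, is a Hamilton sequence for `RR_n({2,3,n})`. -/
theorem stmt15 (n : ℕ) (hn : 3 ≤ n) :
    IsHamiltonSeq n {2, 3, n} (reuseOp n (recycleD (n - 1))) := by
  obtain ⟨k, rfl⟩ : ∃ k, n = k + 1 := ⟨n - 1, by omega⟩
  have hR : ∀ r ∈ ({k - 1, k} : Set ℕ), k - 1 ≤ r ∧ r ≤ k := by
    rintro r (rfl | rfl) <;> omega
  rw [Nat.add_sub_cancel, reuseOp_eq_flatten_map]
  refine (isHamiltonSeq_recycleD (by omega)).flatten_map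
    (fun r hr => have := hR r hr; ⟨by omega, this.2⟩) _
    (fun t => sigmaRot (k + 1) (k + 1) ^ t) Fin.revPerm
    (fun r _ => length_reuseBlock (by omega) r) (fun r _ t ht => partialProd_reuseBlock ht)
    (fun r hr => have := hR r hr; prod_map_sigmaRot_reuseBlock (by omega) (by omega))
    (by ext; simp)
    (injOn_inv_apply_zero_of_apply_neg fun t _ => sigmaRot_succ_self_pow_apply_neg k t) ?_
  intro r hr x hx
  have := hR r hr
  simp only [reuseBlock, List.mem_append, List.mem_replicate, List.mem_singleton] at hx
  simp only [Set.mem_insert_iff, Set.mem_singleton_iff]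
  omega
end
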